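/- arXiv:1902.08568 — 9 statements merged into one kernel-verified Lean document; each statement's English description precedes it below -/
import Mathlib

section
/- Work-difference identity (Eq. (A.3.3) of the paper, classical form): W_nonid − W_Λ = ∑ l m, (r l − p l) * P l m * Ef m, where r l = ∑ n, p n * q l n is the diagonal of the unconditional post-measurement state of the first measurement. -/
/-!
The non-ideal scheme is the ideal one driven by the composed kernel `K n m = ∑ l, q l n * P l m`,
which is again row-stochastic. For any row-stochastic kernel the mean work is the mean final
energy minus `∑ n, p n * E0 n`, so the initial energies cancel in the difference; and the final
energy under `K` from `p` is the final energy under `P` from `r`.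
-/

open Finset

section StochasticKernel

variable {α β γ R : Type*} [Fintype β] [Fintype γ] [CommRing R]

theorem sum_sum_mul_mul_sub_of_sum_eq_one [Fintype α] (w : α → R) (K : α → γ → R)
    (hK : ∀ n, ∑ m, K n m = 1) (E₀ : α → R) (E₁ : γ → R) :
    ∑ n, ∑ m, w n * K n m * (E₁ m - E₀ n) =
      ∑ n, ∑ m, w n * K n m * E₁ m - ∑ n, w n * E₀ n := by
  simp only [mul_sub, sum_sub_distrib]
  congr 1
  refine sum_congr rfl fun n _ => ?_
  rw [← sum_mul, ← mul_sum, hK, mul_one]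

theorem sum_sum_mul_eq_one_of_sum_eq_one (q : β → α → R) (P : β → γ → R)
    (hq : ∀ n, ∑ l, q l n = 1) (hP : ∀ l, ∑ m, P l m = 1) (n : α) :
    ∑ m, ∑ l, q l n * P l m = 1 := by
  rw [sum_comm]
  simp only [← mul_sum, hP, mul_one, hq]

theorem sum_sum_mul_sum_mul_mul_eq [Fintype α] (p : α → R) (q : β → α → R) (P : β → γ → R)
    (f : γ → R) :
    ∑ n, ∑ m, p n * (∑ l, q l n * P l m) * f m =
      ∑ l, ∑ m, (∑ n, p n * q l n) * P l m * f m := by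
  simp only [mul_sum, sum_mul]
  rw [sum_comm_cycle]
  refine sum_congr rfl fun l _ => ?_
  rw [sum_comm]
  exact sum_congr rfl fun m _ => sum_congr rfl fun n _ => by ring

end StochasticKernel

theorem nonideal_work_difference_general
    (d : ℕ) (E0 Ef : Fin d → ℝ)
    (p : Fin d → ℝ)
    (P : Fin d → Fin d → ℝ)
    (hP1 : ∀ l, ∑ m, P l m = 1)
    (q : Fin d → Fin d → ℝ)
    (hq1 : ∀ n, ∑ l, q l n = 1)
    (r : Fin d → ℝ) (hr : ∀ l, r l = ∑ n, p n * q l n) :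
    (∑ n, ∑ m, ∑ l, p n * q l n * P l m * (Ef m - E0 n)) -
      (∑ n, ∑ m, p n * P n m * (Ef m - E0 n)) =
      ∑ l, ∑ m, (r l - p l) * P l m * Ef m := by
  have hnonideal : ∑ n, ∑ m, ∑ l, p n * q l n * P l m * (Ef m - E0 n) =
      ∑ n, ∑ m, p n * (∑ l, q l n * P l m) * (Ef m - E0 n) := by
    simp only [mul_sum, sum_mul, mul_assoc]
  rw [hnonideal,
    sum_sum_mul_mul_sub_of_sum_eq_one _ _ (sum_sum_mul_eq_one_of_sum_eq_one q P hq1 hP1),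
    sum_sum_mul_mul_sub_of_sum_eq_one _ _ hP1, sum_sum_mul_sum_mul_mul_eq]
  simp only [← hr, sub_mul, sum_sub_distrib]
  ring

/-- Work-difference identity (Eq. (A.3.3), classical form):
`W_nonid − W_Λ = ∑ l m, (r l − p l) * P l m * Ef m`, where
`r l = ∑ n, p n * q l n` is the diagonal of the unconditional
post-measurement state of the first measurement. -/
theorem nonideal_work_difference
    (d : ℕ) (hd : 1 ≤ d) (E0 Ef : Fin d → ℝ) (β : ℝ) (hβ : 0 < β)
    (p : Fin d → ℝ)
    (hp : ∀ n, p n = Real.exp (-β * E0 n) / ∑ k, Real.exp (-β * E0 k))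
    (P : Fin d → Fin d → ℝ)
    (hP0 : ∀ l m, 0 ≤ P l m) (hP1 : ∀ l, ∑ m, P l m = 1)
    (q : Fin d → Fin d → ℝ)
    (hq0 : ∀ l n, 0 ≤ q l n) (hq1 : ∀ n, ∑ l, q l n = 1)
    (r : Fin d → ℝ) (hr : ∀ l, r l = ∑ n, p n * q l n) :
    (∑ n, ∑ m, ∑ l, p n * q l n * P l m * (Ef m - E0 n)) -
      (∑ n, ∑ m, p n * P n m * (Ef m - E0 n)) =
      ∑ l, ∑ m, (r l - p l) * P l m * Ef m :=
  nonideal_work_difference_general d E0 Ef p P hP1 q hq1 r hr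
end

section
/- Deviation bound for the non-ideal work estimate (Sec. III of the paper): if the measurement-disturbance probabilities satisfy q n n = C for every n, then |W_nonid − W_Λ| ≤ (1 − C) * ((⨆ m, Ef m) − (⨅ m, Ef m)), i.e. the deviation of the non-ideal work estimate from its ideal value is at most (1 − C) times the spectral spread of the final Hamiltonian. -/
/-!
Writing `F l = ∑ m, P l m * Ef m` for the mean final energy after the drive started in `l`,
the energies `E0 n` cancel and the deviation becomes `∑ n, p n * ∑ l, q l n * (F l - F n)`.
The diagonal term `l = n` vanishes, every other `F l - F n` is a difference of two averages of
`Ef` and so lies within the spread of `Ef`, and the off-diagonal weights of column `n` sum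
to `1 - C`.
-/

open Finset

section WeightedSums

variable {ι : Type*} [Fintype ι] {w : ι → ℝ}

theorem sum_mul_sub_const_of_sum_eq_one (hw : ∑ i, w i = 1) (f : ι → ℝ) (c : ℝ) :
    ∑ i, w i * (f i - c) = ∑ i, w i * f i - c := by
  simp only [mul_sub, sum_sub_distrib, ← sum_mul, hw, one_mul]

theorem sum_mul_le_of_mem_stdSimplex (hw : w ∈ stdSimplex ℝ ι) {f : ι → ℝ} {b : ℝ}
    (hf : ∀ i, f i ≤ b) : ∑ i, w i * f i ≤ b :=
  calc ∑ i, w i * f i ≤ ∑ i, w i * b := sum_le_sum fun i _ => by gcongr; exacts [hw.1 i, hf i]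
    _ = b := by rw [← sum_mul, hw.2, one_mul]

theorem le_sum_mul_of_mem_stdSimplex (hw : w ∈ stdSimplex ℝ ι) {f : ι → ℝ} {a : ℝ}
    (hf : ∀ i, a ≤ f i) : a ≤ ∑ i, w i * f i :=
  calc a = ∑ i, w i * a := by rw [← sum_mul, hw.2, one_mul]
    _ ≤ ∑ i, w i * f i := sum_le_sum fun i _ => by gcongr; exacts [hw.1 i, hf i]

theorem abs_sum_mul_le_of_mem_stdSimplex (hw : w ∈ stdSimplex ℝ ι) {f : ι → ℝ} {b : ℝ}
    (hf : ∀ i, |f i| ≤ b) : |∑ i, w i * f i| ≤ b :=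
  abs_le.2 ⟨le_sum_mul_of_mem_stdSimplex hw fun i => (abs_le.1 (hf i)).1,
    sum_mul_le_of_mem_stdSimplex hw fun i => (abs_le.1 (hf i)).2⟩

theorem abs_sum_mul_sub_sum_mul_le_of_mem_stdSimplex {v : ι → ℝ} (hw : w ∈ stdSimplex ℝ ι)
    (hv : v ∈ stdSimplex ℝ ι) {f : ι → ℝ} {a b : ℝ} (ha : ∀ i, a ≤ f i) (hb : ∀ i, f i ≤ b) :
    |∑ i, w i * f i - ∑ i, v i * f i| ≤ b - a := by
  have := sum_mul_le_of_mem_stdSimplex hw hb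
  have := le_sum_mul_of_mem_stdSimplex hw ha
  have := sum_mul_le_of_mem_stdSimplex hv hb
  have := le_sum_mul_of_mem_stdSimplex hv ha
  rw [abs_le]
  constructor <;> linarith

theorem abs_sum_mul_le_one_sub_mul_of_mem_stdSimplex [DecidableEq ι] (hw : w ∈ stdSimplex ℝ ι)
    {g : ι → ℝ} {K : ℝ} (j : ι) (hgj : g j = 0) (hg : ∀ i, |g i| ≤ K) :
    |∑ i, w i * g i| ≤ (1 - w j) * K :=
  calc |∑ i, w i * g i| = |∑ i ∈ univ.erase j, w i * g i| := by
        rw [← add_sum_erase _ _ (mem_univ j), hgj, mul_zero, zero_add]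
    _ ≤ ∑ i ∈ univ.erase j, |w i * g i| := abs_sum_le_sum_abs _ _
    _ ≤ ∑ i ∈ univ.erase j, w i * K := sum_le_sum fun i _ => by
        rw [abs_mul, abs_of_nonneg (hw.1 i)]; exact mul_le_mul_of_nonneg_left (hg i) (hw.1 i)
    _ = (1 - w j) * K := by rw [← sum_mul, sum_erase_eq_sub (mem_univ j), hw.2]

end WeightedSums

theorem gibbs_mem_stdSimplex {ι : Type*} [Fintype ι] [Nonempty ι] (β : ℝ) (E : ι → ℝ) :
    (fun n => Real.exp (-β * E n) / ∑ k, Real.exp (-β * E k)) ∈ stdSimplex ℝ ι := by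
  have hZ : 0 < ∑ k, Real.exp (-β * E k) := sum_pos (fun k _ => Real.exp_pos _) univ_nonempty
  exact ⟨fun n => by positivity, by rw [← sum_div, div_self hZ.ne']⟩

theorem nonideal_sub_ideal_work_eq {ι : Type*} [Fintype ι] (p E0 Ef : ι → ℝ)
    (P q : ι → ι → ℝ) (hP1 : ∀ l, ∑ m, P l m = 1) (hq1 : ∀ n, ∑ l, q l n = 1) :
    (∑ n, ∑ m, ∑ l, p n * q l n * P l m * (Ef m - E0 n)) -
        (∑ n, ∑ m, p n * P n m * (Ef m - E0 n)) =
      ∑ n, p n * ∑ l, q l n * ((∑ m, P l m * Ef m) - ∑ m, P n m * Ef m) := by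
  rw [← sum_sub_distrib]
  refine sum_congr rfl fun n _ => ?_
  have hnonideal : ∑ m, ∑ l, p n * q l n * P l m * (Ef m - E0 n) =
      p n * ∑ l, q l n * ∑ m, P l m * (Ef m - E0 n) := by
    simp only [mul_sum]
    rw [sum_comm]
    exact sum_congr rfl fun l _ => sum_congr rfl fun m _ => by ring
  have hideal : ∑ m, p n * P n m * (Ef m - E0 n) = p n * ∑ m, P n m * (Ef m - E0 n) := by
    simp only [mul_sum, mul_assoc]
  simp only [hnonideal, hideal, sum_mul_sub_const_of_sum_eq_one (hP1 _),
    sum_mul_sub_const_of_sum_eq_one (hq1 n)]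
  ring

theorem nonideal_work_deviation_bound_general
    (d : ℕ) (hd : 1 ≤ d) (E0 Ef : Fin d → ℝ) (β : ℝ)
    (p : Fin d → ℝ)
    (hp : ∀ n, p n = Real.exp (-β * E0 n) / ∑ k, Real.exp (-β * E0 k))
    (P : Fin d → Fin d → ℝ)
    (hP0 : ∀ l m, 0 ≤ P l m) (hP1 : ∀ l, ∑ m, P l m = 1)
    (q : Fin d → Fin d → ℝ)
    (hq0 : ∀ l n, 0 ≤ q l n) (hq1 : ∀ n, ∑ l, q l n = 1)
    (C : ℝ) (hqC : ∀ n, q n n = C) :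
    |(∑ n, ∑ m, ∑ l, p n * q l n * P l m * (Ef m - E0 n)) -
        (∑ n, ∑ m, p n * P n m * (Ef m - E0 n))| ≤
      (1 - C) * ((⨆ m, Ef m) - (⨅ m, Ef m)) := by
  have : Nonempty (Fin d) := ⟨⟨0, hd⟩⟩
  have hp_mem : p ∈ stdSimplex ℝ (Fin d) := funext hp ▸ gibbs_mem_stdSimplex β E0
  have hspread : ∀ l n,
      |∑ m, P l m * Ef m - ∑ m, P n m * Ef m| ≤ (⨆ m, Ef m) - ⨅ m, Ef m :=
    fun l n => abs_sum_mul_sub_sum_mul_le_of_mem_stdSimplex ⟨hP0 l, hP1 l⟩ ⟨hP0 n, hP1 n⟩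
      (Finite.ciInf_le Ef) (Finite.le_ciSup Ef)
  rw [nonideal_sub_ideal_work_eq p E0 Ef P q hP1 hq1]
  refine abs_sum_mul_le_of_mem_stdSimplex hp_mem fun n => ?_
  simpa only [hqC] using abs_sum_mul_le_one_sub_mul_of_mem_stdSimplex (w := fun l => q l n)
    ⟨(hq0 · n), hq1 n⟩ n (sub_self _) (hspread · n)

/-- Deviation bound for the non-ideal work estimate (Sec. III):
if `q n n = C` for every `n`, then
`|W_nonid − W_Λ| ≤ (1 − C) * ((⨆ m, Ef m) − (⨅ m, Ef m))`. -/
theorem nonideal_work_deviation_bound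
    (d : ℕ) (hd : 1 ≤ d) (E0 Ef : Fin d → ℝ) (β : ℝ) (hβ : 0 < β)
    (p : Fin d → ℝ)
    (hp : ∀ n, p n = Real.exp (-β * E0 n) / ∑ k, Real.exp (-β * E0 k))
    (P : Fin d → Fin d → ℝ)
    (hP0 : ∀ l m, 0 ≤ P l m) (hP1 : ∀ l, ∑ m, P l m = 1)
    (q : Fin d → Fin d → ℝ)
    (hq0 : ∀ l n, 0 ≤ q l n) (hq1 : ∀ n, ∑ l, q l n = 1)
    (C : ℝ) (hC0 : 0 ≤ C) (hC1 : C ≤ 1) (hqC : ∀ n, q n n = C) :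
    |(∑ n, ∑ m, ∑ l, p n * q l n * P l m * (Ef m - E0 n)) -
        (∑ n, ∑ m, p n * P n m * (Ef m - E0 n))| ≤
      (1 - C) * ((⨆ m, Ef m) - (⨅ m, Ef m)) :=
  nonideal_work_deviation_bound_general d hd E0 Ef β p hp P hP0 hP1 q hq0 hq1 C hqC
end

section
/- Classical Fannes–Audenaert inequality (used in the proof of Proposition 2 of the paper): for any two probability distributions p r : Fin d → ℝ (each with nonnegative entries summing to 1) with d ≥ 2, letting T = (1/2) * ∑ i, |r i − p i| denote their total variation distance, the Shannon entropies satisfy |(∑ i, Real.negMulLog (r i)) − (∑ i, Real.negMulLog (p i))| ≤ T * Real.log (d − 1) + Real.binEntropy T. -/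
open Finset

lemma negMulLog_sum_le {ι : Type*} (s : Finset ι) (w : ι → ℝ) (hw : ∀ i ∈ s, 0 ≤ w i) :
    Real.negMulLog (∑ i ∈ s, w i) ≤ ∑ i ∈ s, Real.negMulLog (w i) := by
  have hS : Real.negMulLog (∑ i ∈ s, w i) = ∑ i ∈ s, -(w i * Real.log (∑ j ∈ s, w j)) := by
    rw [Real.negMulLog, neg_mul, Finset.sum_neg_distrib, Finset.sum_mul]
  rw [hS]
  refine Finset.sum_le_sum fun i hi => ?_
  rcases eq_or_lt_of_le (hw i hi) with h0 | h0
  · simp [← h0, Real.negMulLog]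
  · have hle : w i ≤ ∑ j ∈ s, w j := Finset.single_le_sum hw hi
    have : Real.log (w i) ≤ Real.log (∑ j ∈ s, w j) := Real.log_le_log h0 hle
    rw [Real.negMulLog, neg_mul, neg_le_neg_iff]
    exact mul_le_mul_of_nonneg_left this (hw i hi)

lemma sum_negMulLog_le_log_card {ι : Type*} (s : Finset ι) (hs : s.Nonempty) (q : ι → ℝ)
    (hq0 : ∀ i ∈ s, 0 ≤ q i) (hq1 : ∑ i ∈ s, q i = 1) :
    ∑ i ∈ s, Real.negMulLog (q i) ≤ Real.log s.card := by
  have hcard : (0 : ℝ) < s.card := by exact_mod_cast Finset.card_pos.mpr hs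
  have hjensen := Real.concaveOn_negMulLog.le_map_sum (t := s)
    (w := fun _ => (s.card : ℝ)⁻¹) (p := q)
    (fun i _ => by positivity)
    (by rw [Finset.sum_const, nsmul_eq_mul]; field_simp)
    (fun i hi => Set.mem_Ici.mpr (hq0 i hi))
  simp only [smul_eq_mul, ← Finset.mul_sum, hq1, mul_one] at hjensen
  have : Real.negMulLog ((s.card : ℝ)⁻¹) = (s.card : ℝ)⁻¹ * Real.log s.card := by
    rw [Real.negMulLog, Real.log_inv]; ring
  rw [this] at hjensen
  calc ∑ i ∈ s, Real.negMulLog (q i)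
      = (s.card : ℝ) * ((s.card:ℝ)⁻¹ * ∑ i ∈ s, Real.negMulLog (q i)) := by field_simp
    _ ≤ (s.card : ℝ) * ((s.card : ℝ)⁻¹ * Real.log s.card) := by
        apply mul_le_mul_of_nonneg_left _ hcard.le
        rw [Finset.mul_sum] at hjensen ⊢
        exact hjensen
    _ = Real.log s.card := by field_simp

lemma fannes_oneSided
    (d : ℕ) (hd : 2 ≤ d) (p r : Fin d → ℝ)
    (hp0 : ∀ i, 0 ≤ p i) (hp1 : ∑ i, p i = 1)
    (hr0 : ∀ i, 0 ≤ r i) (hr1 : ∑ i, r i = 1) :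
    (∑ i, Real.negMulLog (r i)) - (∑ i, Real.negMulLog (p i)) ≤
      ((1 / 2 : ℝ) * ∑ i, |r i - p i|) * Real.log (d - 1) +
        Real.binEntropy ((1 / 2 : ℝ) * ∑ i, |r i - p i|) := by
  set T : ℝ := (1 / 2 : ℝ) * ∑ i, |r i - p i| with hTdef
  set m : Fin d → ℝ := fun i => min (p i) (r i) with hm
  set a : Fin d → ℝ := fun i => p i - m i with haa
  set b : Fin d → ℝ := fun i => r i - m i with hbb
  have ha0 : ∀ i, 0 ≤ a i := fun i => sub_nonneg.2 (min_le_left _ _)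
  have hb0 : ∀ i, 0 ≤ b i := fun i => sub_nonneg.2 (min_le_right _ _)
  have hab : ∀ i, a i * b i = 0 := by
    intro i
    rcases le_total (p i) (r i) with h | h
    · simp [haa, hm, min_eq_left h]
    · simp [hbb, hm, min_eq_right h]
  have habs : ∀ i, a i + b i = |r i - p i| := by
    intro i
    simp only [haa, hbb, hm]
    rcases le_total (p i) (r i) with h | h
    · rw [min_eq_left h, abs_of_nonneg (sub_nonneg.2 h)]; ring
    · rw [min_eq_right h, abs_of_nonpos (sub_nonpos.2 h)]; ring
  have hsum2 : (∑ i, a i) + (∑ i, b i) = 2 * T := by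
    rw [← Finset.sum_add_distrib, Finset.sum_congr rfl (fun i _ => habs i), hTdef]; ring
  have hsumd : (∑ i, a i) - (∑ i, b i) = 0 := by
    rw [← Finset.sum_sub_distrib]
    have : ∀ i ∈ Finset.univ, a i - b i = p i - r i := fun i _ => by simp only [haa, hbb]; ring
    rw [Finset.sum_congr rfl this, Finset.sum_sub_distrib, hp1, hr1]; ring
  have hTa : ∑ i, a i = T := by linarith
  have hTb : ∑ i, b i = T := by linarith
  have hT0 : 0 ≤ T := by
    rw [← hTa]; exact Finset.sum_nonneg fun i _ => ha0 i
  have hap : ∀ i, a i ≤ p i := by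
    intro i
    have : 0 ≤ m i := le_min (hp0 i) (hr0 i)
    simp only [haa]; linarith
  have hT1 : T ≤ 1 := by
    rw [← hTa, ← hp1]; exact Finset.sum_le_sum fun i _ => hap i
  rcases eq_or_lt_of_le hT0 with hTz | hTpos
  · -- T = 0 : distributions are equal
    have hall : ∀ i, a i = 0 ∧ b i = 0 := by
      intro i
      have h1 : ∑ i, a i = 0 := by rw [hTa, ← hTz]
      have h2 : ∑ i, b i = 0 := by rw [hTb, ← hTz]
      constructor
      · exact (Finset.sum_eq_zero_iff_of_nonneg (fun i _ => ha0 i)).1 h1 i (Finset.mem_univ i)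
      · exact (Finset.sum_eq_zero_iff_of_nonneg (fun i _ => hb0 i)).1 h2 i (Finset.mem_univ i)
    have hpr : ∀ i, r i = p i := by
      intro i
      have h1 := (hall i).1
      have h2 := (hall i).2
      simp only [haa, hbb, sub_eq_zero] at h1 h2
      rw [h2, ← h1]
    have : (∑ i, Real.negMulLog (r i)) = ∑ i, Real.negMulLog (p i) :=
      Finset.sum_congr rfl fun i _ => by rw [hpr i]
    rw [this, ← hTz]
    simp
  · -- main case T > 0
    have hTne : T ≠ 0 := ne_of_gt hTpos
    set q : Fin d → ℝ := fun j => b j / T with hq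
    have hq0 : ∀ j, 0 ≤ q j := fun j => div_nonneg (hb0 j) hT0
    have hq1 : ∑ j, q j = 1 := by
      rw [hq]; rw [← Finset.sum_div, hTb, div_self hTne]
    set e : Fin d → ℝ := fun i => a i / p i with he
    have hpa0 : ∀ i, p i = 0 → a i = 0 := by
      intro i h; have := hap i; have := ha0 i; linarith
    have he0 : ∀ i, 0 ≤ e i := fun i => div_nonneg (ha0 i) (hp0 i)
    have he1 : ∀ i, e i ≤ 1 := by
      intro i
      rcases eq_or_lt_of_le (hp0 i) with h | h
      · simp [he, hpa0 i h.symm]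
      · exact (div_le_one h).2 (hap i)
    have hpe : ∀ i, p i * e i = a i := by
      intro i
      rcases eq_or_lt_of_le (hp0 i) with h | h
      · rw [← h, hpa0 i h.symm]; ring
      · have := h.ne'; simp only [he]; field_simp
    set w : Fin d → Fin d → ℝ := fun i j => if j = i then m i else a i * b j / T with hw
    have hw0 : ∀ i j, 0 ≤ w i j := by
      intro i j
      simp only [hw]
      split
      · exact le_min (hp0 i) (hr0 i)
      · exact div_nonneg (mul_nonneg (ha0 i) (hb0 j)) hT0
    have hcol : ∀ j, ∑ i, w i j = r j := by
      intro j
      rw [← Finset.add_sum_erase _ (fun i => w i j) (Finset.mem_univ j)]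
      have h1 : ∀ i ∈ Finset.univ.erase j, w i j = a i * (b j / T) := by
        intro i hi
        have : j ≠ i := (Finset.ne_of_mem_erase hi).symm
        simp only [hw, if_neg this]; ring
      rw [Finset.sum_congr rfl h1, ← Finset.sum_mul]
      have h2 : ∑ i ∈ Finset.univ.erase j, a i = T - a j := by
        have := Finset.add_sum_erase Finset.univ a (Finset.mem_univ j)
        rw [hTa] at this; linarith
      rw [h2]
      have h3 : (T - a j) * (b j / T) = b j := by
        have := hab j
        field_simp
        linarith [hab j]
      rw [h3]
      simp only [hw, if_pos rfl, hbb]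
      ring
    have hrow : ∀ i, ∑ j, Real.negMulLog (w i j) ≤
        Real.negMulLog (p i) + p i * Real.binEntropy (e i) + (p i * e i) * Real.log ((d : ℝ) - 1) := by
      intro i
      rcases eq_or_lt_of_le (ha0 i) with hai | hai
      · -- a i = 0
        have hei : e i = 0 := by simp [he, ← hai]
        have hmi : m i = p i := by simp only [haa] at hai; linarith
        have hzero : ∀ j ∈ Finset.univ.erase i, Real.negMulLog (w i j) = 0 := by
          intro j hj
          have : j ≠ i := Finset.ne_of_mem_erase hj
          simp [hw, if_neg this, ← hai]
        rw [← Finset.add_sum_erase _ (fun j => Real.negMulLog (w i j)) (Finset.mem_univ i),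
          Finset.sum_eq_zero hzero]
        simp [hw, hmi, hei]
      · -- 0 < a i
        have hpi : 0 < p i := lt_of_lt_of_le hai (hap i)
        have hbi : b i = 0 := by
          have := hab i
          rcases mul_eq_zero.1 this with h | h
          · exact absurd h (ne_of_gt hai)
          · exact h
        have hqi : q i = 0 := by simp [hq, hbi]
        have hmi : m i = p i * (1 - e i) := by
          have h1 : p i * e i = a i := hpe i
          simp only [haa] at *
          nlinarith [hpe i]
        have hq1' : ∑ j ∈ Finset.univ.erase i, q j = 1 := by
          have := Finset.add_sum_erase Finset.univ q (Finset.mem_univ i)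
          rw [hq1] at this
          rw [hqi] at this
          linarith
        have hwoff : ∀ j ∈ Finset.univ.erase i, w i j = p i * (e i * q j) := by
          intro j hj
          have hne : j ≠ i := Finset.ne_of_mem_erase hj
          simp only [hw, if_neg hne, hq]
          rw [← hpe i]
          field_simp
        have hQle : ∑ j ∈ Finset.univ.erase i, Real.negMulLog (q j) ≤ Real.log ((d:ℝ) - 1) := by
          have hne : (Finset.univ.erase i).Nonempty := by
            rw [← Finset.card_pos, Finset.card_erase_of_mem (Finset.mem_univ _),
              Finset.card_univ, Fintype.card_fin]
            omega
          have := sum_negMulLog_le_log_card (Finset.univ.erase i) hne q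
            (fun j _ => hq0 j) hq1'
          have hc : ((Finset.univ.erase i).card : ℝ) = (d : ℝ) - 1 := by
            rw [Finset.card_erase_of_mem (Finset.mem_univ _), Finset.card_univ, Fintype.card_fin]
            rw [Nat.cast_sub (by omega)]; simp
          rwa [hc] at this
        calc ∑ j, Real.negMulLog (w i j)
            = Real.negMulLog (w i i) + ∑ j ∈ Finset.univ.erase i, Real.negMulLog (w i j) :=
              (Finset.add_sum_erase _ _ (Finset.mem_univ i)).symm
          _ = Real.negMulLog (p i * (1 - e i)) +
              ∑ j ∈ Finset.univ.erase i, Real.negMulLog (p i * (e i * q j)) := by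
              congr 1
              · simp only [hw, if_pos rfl, hmi]
              · exact Finset.sum_congr rfl fun j hj => by rw [hwoff j hj]
          _ = ((1 - e i) * Real.negMulLog (p i) + p i * Real.negMulLog (1 - e i)) +
              ∑ j ∈ Finset.univ.erase i, ((e i * q j) * Real.negMulLog (p i) +
                p i * (q j * Real.negMulLog (e i) + e i * Real.negMulLog (q j))) := by
              rw [Real.negMulLog_mul]
              congr 1
              exact Finset.sum_congr rfl fun j hj => by
                rw [Real.negMulLog_mul, Real.negMulLog_mul]
          _ = Real.negMulLog (p i) +
              p i * (Real.negMulLog (e i) + Real.negMulLog (1 - e i)) +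
              (p i * e i) * ∑ j ∈ Finset.univ.erase i, Real.negMulLog (q j) := by
              rw [Finset.sum_add_distrib]
              have hA : ∑ j ∈ Finset.univ.erase i, (e i * q j) * Real.negMulLog (p i)
                  = e i * Real.negMulLog (p i) := by
                have : ∀ j ∈ Finset.univ.erase i, (e i * q j) * Real.negMulLog (p i)
                    = q j * (e i * Real.negMulLog (p i)) := fun j _ => by ring
                rw [Finset.sum_congr rfl this, ← Finset.sum_mul, hq1', one_mul]
              have hB : ∑ j ∈ Finset.univ.erase i,
                  p i * (q j * Real.negMulLog (e i) + e i * Real.negMulLog (q j))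
                  = p i * Real.negMulLog (e i) +
                    (p i * e i) * ∑ j ∈ Finset.univ.erase i, Real.negMulLog (q j) := by
                rw [← Finset.mul_sum, Finset.sum_add_distrib, ← Finset.sum_mul, ← Finset.mul_sum,
                  hq1']
                ring
              rw [hA, hB]
              ring
          _ ≤ Real.negMulLog (p i) +
              p i * (Real.negMulLog (e i) + Real.negMulLog (1 - e i)) +
              (p i * e i) * Real.log ((d:ℝ) - 1) := by
              have : 0 ≤ p i * e i := mul_nonneg hpi.le (he0 i)
              gcongr
          _ = Real.negMulLog (p i) + p i * Real.binEntropy (e i) +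
              (p i * e i) * Real.log ((d : ℝ) - 1) := by
              rw [Real.binEntropy_eq_negMulLog_add_negMulLog_one_sub]
    -- Jensen for binEntropy
    have hjensen : ∑ i, p i * Real.binEntropy (e i) ≤ Real.binEntropy T := by
      have := Real.strictConcave_binEntropy.concaveOn.le_map_sum (t := Finset.univ)
        (w := p) (p := e) (fun i _ => hp0 i) hp1
        (fun i _ => Set.mem_Icc.2 ⟨he0 i, he1 i⟩)
      simp only [smul_eq_mul] at this
      have hsum : ∑ i, p i * e i = T := by
        rw [Finset.sum_congr rfl (fun i _ => hpe i), hTa]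
      rwa [hsum] at this
    have hsumpe : ∑ i, p i * e i = T := by
      rw [Finset.sum_congr rfl (fun i _ => hpe i), hTa]
    have hmain : ∑ j, Real.negMulLog (r j) ≤
        (∑ i, Real.negMulLog (p i)) + Real.binEntropy T + T * Real.log ((d:ℝ) - 1) := by
      calc ∑ j, Real.negMulLog (r j)
          = ∑ j, Real.negMulLog (∑ i, w i j) := by
            exact Finset.sum_congr rfl fun j _ => by rw [hcol j]
        _ ≤ ∑ j, ∑ i, Real.negMulLog (w i j) :=
            Finset.sum_le_sum fun j _ => negMulLog_sum_le _ _ (fun i _ => hw0 i j)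
        _ = ∑ i, ∑ j, Real.negMulLog (w i j) := Finset.sum_comm
        _ ≤ ∑ i, (Real.negMulLog (p i) + p i * Real.binEntropy (e i) +
              (p i * e i) * Real.log ((d:ℝ) - 1)) :=
            Finset.sum_le_sum fun i _ => hrow i
        _ = (∑ i, Real.negMulLog (p i)) + (∑ i, p i * Real.binEntropy (e i)) +
              T * Real.log ((d:ℝ) - 1) := by
            rw [Finset.sum_add_distrib, Finset.sum_add_distrib, ← Finset.sum_mul, hsumpe]
        _ ≤ (∑ i, Real.negMulLog (p i)) + Real.binEntropy T + T * Real.log ((d:ℝ) - 1) := by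
            linarith
    have hcast : ((d : ℝ) - 1) = ((d : ℝ) - 1) := rfl
    linarith [hmain]

/-- Classical Fannes–Audenaert inequality: for probability distributions
`p r : Fin d → ℝ` with `d ≥ 2` and total variation distance
`T = (1/2) * ∑ i, |r i − p i|`, the Shannon entropies satisfy
`|H(r) − H(p)| ≤ T * log (d − 1) + binEntropy T`. -/
theorem fannes_audenaert_classical
    (d : ℕ) (hd : 2 ≤ d) (p r : Fin d → ℝ)
    (hp0 : ∀ i, 0 ≤ p i) (hp1 : ∑ i, p i = 1)
    (hr0 : ∀ i, 0 ≤ r i) (hr1 : ∑ i, r i = 1) :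
    |(∑ i, Real.negMulLog (r i)) - (∑ i, Real.negMulLog (p i))| ≤
      ((1 / 2 : ℝ) * ∑ i, |r i - p i|) * Real.log (d - 1) +
        Real.binEntropy ((1 / 2 : ℝ) * ∑ i, |r i - p i|) := by
  rw [abs_sub_le_iff]
  constructor
  · exact fannes_oneSided d hd p r hp0 hp1 hr0 hr1
  · have hsym : (∑ i, |p i - r i|) = ∑ i, |r i - p i| :=
      Finset.sum_congr rfl fun i _ => abs_sub_comm _ _
    have := fannes_oneSided d hd r p hr0 hr1 hp0 hp1
    rwa [hsym] at this
end

section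
/- Proposition 2 of the paper (entropy production bound for maximally correlating measurements, classical form): if the measurement-disturbance probabilities satisfy q n n = C for every n with 1/d ≤ C ≤ 1 and d ≥ 2, then the entropy change ΔS₀ = (∑ l, Real.negMulLog (r l)) − (∑ n, Real.negMulLog (p n)) produced by the first non-ideal measurement, where r l = ∑ n, p n * q l n, satisfies ΔS₀ ≤ (1 − C) * Real.log (d − 1) + Real.binEntropy C. -/
/-!
The first measurement maps the Gibbs distribution `p` to `r = q p`. Entropy can only grow
under merging of outcomes, so `H(r)` is at most the entropy of the joint distribution
`p n * q l n`, which by the chain rule is `H(p) + ∑ n, p n * H(q · n)`. Each column `q · n`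
puts mass `C` on `n`, so Fano's bound caps its entropy by `(1 - C) log (d - 1) + h(C)`.
-/

open Finset

namespace Real

lemma negMulLog_sum_le_sum_negMulLog {ι : Type*} (s : Finset ι) {f : ι → ℝ}
    (hf : ∀ i ∈ s, 0 ≤ f i) : negMulLog (∑ i ∈ s, f i) ≤ ∑ i ∈ s, negMulLog (f i) := by
  rw [negMulLog, neg_mul, ← mul_neg, sum_mul]
  refine sum_le_sum fun i hi => ?_
  rcases (hf i hi).eq_or_lt with hfi | hfi
  · simp [← hfi]
  · have hlog : log (f i) ≤ log (∑ j ∈ s, f j) :=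
      log_le_log hfi (single_le_sum hf hi)
    rw [negMulLog, neg_mul, mul_neg, neg_le_neg_iff]
    exact mul_le_mul_of_nonneg_left hlog hfi.le

lemma sum_sum_negMulLog_mul {ι κ : Type*} [Fintype ι] [Fintype κ] (p : ι → ℝ)
    {q : κ → ι → ℝ} (hq : ∀ i, ∑ k, q k i = 1) :
    ∑ k, ∑ i, negMulLog (p i * q k i) =
      ∑ i, negMulLog (p i) + ∑ i, p i * ∑ k, negMulLog (q k i) := by
  rw [sum_comm, ← sum_add_distrib]
  refine sum_congr rfl fun i _ => ?_
  simp only [negMulLog_mul, sum_add_distrib, ← sum_mul, ← mul_sum, hq i, one_mul]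

/-- Jensen's inequality for the concave `negMulLog` with uniform weights `1 / #s`. -/
lemma sum_negMulLog_le {ι : Type*} (s : Finset ι) {f : ι → ℝ} (hf : ∀ i ∈ s, 0 ≤ f i) :
    ∑ i ∈ s, negMulLog (f i) ≤
      (∑ i ∈ s, f i) * log #s + negMulLog (∑ i ∈ s, f i) := by
  rcases s.eq_empty_or_nonempty with rfl | hs
  · simp
  have hk : (0 : ℝ) < #s := by exact_mod_cast hs.card_pos
  have hjensen : ∑ i ∈ s, (#s : ℝ)⁻¹ • negMulLog (f i) ≤
      negMulLog (∑ i ∈ s, (#s : ℝ)⁻¹ • f i) :=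
    concaveOn_negMulLog.le_map_sum (fun _ _ => by positivity)
      (by simp [hk.ne']) hf
  simp only [smul_eq_mul, ← mul_sum] at hjensen
  rw [mul_comm, negMulLog_mul, negMulLog, log_inv] at hjensen
  have := mul_le_mul_of_nonneg_left hjensen hk.le
  field_simp at this
  linarith

/-- Fano's inequality for a single distribution `f` with "correct outcome" `i₀`. -/
lemma sum_negMulLog_le_fano {ι : Type*} [Fintype ι] {f : ι → ℝ} (hf0 : ∀ i, 0 ≤ f i)
    (hf1 : ∑ i, f i = 1) (i₀ : ι) :
    ∑ i, negMulLog (f i) ≤ (1 - f i₀) * log (Fintype.card ι - 1) + binEntropy (f i₀) := by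
  classical
  have hrest : ∑ i ∈ univ.erase i₀, f i = 1 - f i₀ := by
    rw [← hf1, ← add_sum_erase univ f (mem_univ i₀), add_sub_cancel_left]
  have hcard : ((univ.erase i₀).card : ℝ) = Fintype.card ι - 1 := by
    rw [card_erase_of_mem (mem_univ i₀), card_univ,
      Nat.cast_pred (Fintype.card_pos_iff.mpr ⟨i₀⟩)]
  have hbound := sum_negMulLog_le (univ.erase i₀) fun i _ => hf0 i
  rw [hrest, hcard] at hbound
  rw [← add_sum_erase univ _ (mem_univ i₀), binEntropy_eq_negMulLog_add_negMulLog_one_sub]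
  linarith

end Real

open Real in
theorem entropy_production_bound_general
    (d : ℕ) (hd : 2 ≤ d) (E0 : Fin d → ℝ) (β : ℝ)
    (p : Fin d → ℝ)
    (hp : ∀ n, p n = Real.exp (-β * E0 n) / ∑ k, Real.exp (-β * E0 k))
    (q : Fin d → Fin d → ℝ)
    (hq0 : ∀ l n, 0 ≤ q l n) (hq1 : ∀ n, ∑ l, q l n = 1)
    (C : ℝ) (hqC : ∀ n, q n n = C)
    (r : Fin d → ℝ) (hr : ∀ l, r l = ∑ n, p n * q l n) :
    (∑ l, Real.negMulLog (r l)) - (∑ n, Real.negMulLog (p n)) ≤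
      (1 - C) * Real.log (d - 1) + Real.binEntropy C := by
  have hZ : 0 < ∑ k, exp (-β * E0 k) :=
    sum_pos (fun k _ => exp_pos _) (univ_nonempty_iff.mpr ⟨⟨0, by omega⟩⟩)
  have hp0 : ∀ n, 0 ≤ p n := fun n => by rw [hp n]; positivity
  have hp1 : ∑ n, p n = 1 := by simp only [hp, ← sum_div, div_self hZ.ne']
  calc ∑ l, negMulLog (r l) - ∑ n, negMulLog (p n)
      ≤ ∑ l, ∑ n, negMulLog (p n * q l n) - ∑ n, negMulLog (p n) := by
        gcongr with l
        rw [hr l]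
        exact negMulLog_sum_le_sum_negMulLog _ fun n _ => mul_nonneg (hp0 n) (hq0 l n)
    _ = ∑ n, p n * ∑ l, negMulLog (q l n) := by
        rw [sum_sum_negMulLog_mul p hq1]
        ring
    _ ≤ ∑ n, p n * ((1 - C) * log (d - 1) + binEntropy C) := by
        gcongr with n
        · exact hp0 n
        · simpa [hqC n] using sum_negMulLog_le_fano (fun l => hq0 l n) (hq1 n) n
    _ = (1 - C) * log (d - 1) + binEntropy C := by rw [← sum_mul, hp1, one_mul]

/-- Proposition 2 (entropy production bound for maximally correlating
measurements, classical form): if `q n n = C` for every `n` with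
`1/d ≤ C ≤ 1` and `d ≥ 2`, then the entropy change `ΔS₀` produced by the
first non-ideal measurement satisfies
`ΔS₀ ≤ (1 − C) * log (d − 1) + binEntropy C`. -/
theorem entropy_production_bound
    (d : ℕ) (hd : 2 ≤ d) (E0 : Fin d → ℝ) (β : ℝ) (hβ : 0 < β)
    (p : Fin d → ℝ)
    (hp : ∀ n, p n = Real.exp (-β * E0 n) / ∑ k, Real.exp (-β * E0 k))
    (q : Fin d → Fin d → ℝ)
    (hq0 : ∀ l n, 0 ≤ q l n) (hq1 : ∀ n, ∑ l, q l n = 1)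
    (C : ℝ) (hCd : 1 / (d : ℝ) ≤ C) (hC1 : C ≤ 1) (hqC : ∀ n, q n n = C)
    (r : Fin d → ℝ) (hr : ∀ l, r l = ∑ n, p n * q l n) :
    (∑ l, Real.negMulLog (r l)) - (∑ n, Real.negMulLog (p n)) ≤
      (1 - C) * Real.log (d - 1) + Real.binEntropy C :=
  entropy_production_bound_general d hd E0 β p hp q hq0 hq1 C hqC r hr
end

section
/- Modified Jarzynski equality for non-ideal measurements (Eq. (12)–(13) of the paper): the exponentiated-work average of the non-ideal TPM scheme satisfies ∑ n m l, p n * q l n * P l m * Real.exp (−β * (Ef m − E⁰ n)) = χ * (Zf / Z⁰), where χ = (1 / Zf) * ∑ n m l, Real.exp (−β * Ef m) * q l n * P l m; equivalently ⟨e^{−βW}⟩_nonid = χ * e^{−βΔF} with ΔF = β⁻¹ * Real.log (Z⁰ / Zf). -/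
open Finset

/-- Modified Jarzynski equality for non-ideal measurements (Eqs. (12)–(13)):
`⟨e^{−βW}⟩_nonid = χ * (Zf / Z⁰)`, where
`χ = (1 / Zf) * ∑ n m l, exp (−β Ef m) * q l n * P l m`. -/
theorem modified_jarzynski
    (d : ℕ) (hd : 1 ≤ d) (E0 Ef : Fin d → ℝ) (β : ℝ) (hβ : 0 < β)
    (Z0 Zf : ℝ)
    (hZ0 : Z0 = ∑ n, Real.exp (-β * E0 n))
    (hZf : Zf = ∑ m, Real.exp (-β * Ef m))
    (p : Fin d → ℝ)
    (hp : ∀ n, p n = Real.exp (-β * E0 n) / Z0)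
    (P : Fin d → Fin d → ℝ)
    (hP0 : ∀ l m, 0 ≤ P l m) (hP1 : ∀ l, ∑ m, P l m = 1)
    (q : Fin d → Fin d → ℝ)
    (hq0 : ∀ l n, 0 ≤ q l n) (hq1 : ∀ n, ∑ l, q l n = 1)
    (χ : ℝ)
    (hχ : χ = (1 / Zf) * ∑ n, ∑ m, ∑ l, Real.exp (-β * Ef m) * q l n * P l m) :
    (∑ n, ∑ m, ∑ l, p n * q l n * P l m * Real.exp (-β * (Ef m - E0 n))) =
      χ * (Zf / Z0) := by
  have hZfpos : 0 < Zf := by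
    rw [hZf]
    apply Finset.sum_pos (fun m _ => Real.exp_pos _)
    simpa [Finset.univ_nonempty_iff] using Fin.pos_iff_nonempty.mp hd
  have key : χ * (Zf / Z0) =
      (∑ n, ∑ m, ∑ l, Real.exp (-β * Ef m) * q l n * P l m) / Z0 := by
    rw [hχ]; field_simp
  rw [key, Finset.sum_div]
  refine Finset.sum_congr rfl fun n _ => ?_
  rw [Finset.sum_div]
  refine Finset.sum_congr rfl fun m _ => ?_
  rw [Finset.sum_div]
  refine Finset.sum_congr rfl fun l _ => ?_
  rw [hp n]
  rw [show -β * (Ef m - E0 n) = -β * Ef m + β * E0 n by ring, Real.exp_add]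
  rcases eq_or_ne Z0 0 with h | h
  · simp [h]
  · field_simp
    have he : Real.exp (-(β * E0 n)) * Real.exp (β * E0 n) = 1 := by
      rw [← Real.exp_add]; ring_nf; exact Real.exp_zero
    linear_combination (q l n * P l m) * he
end

section
/- Jarzynski equality for minimally invasive (unital) non-ideal measurements (Sec. IV and Appendix A.5 of the paper): if the measurement-disturbance probabilities are doubly stochastic, i.e. additionally ∑ n, q l n = 1 for every l, and the transition matrix satisfies ∑ l, P l m = 1 for every m, then ∑ n m l, p n * q l n * P l m * Real.exp (−β * (Ef m − E⁰ n)) = Zf / Z⁰, i.e. the original Jarzynski relation ⟨e^{−βW}⟩ = e^{−βΔF} holds exactly. -/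
open Finset

/-!
Weighting the Boltzmann factor `e^{-β(Ef m - E⁰ n)}` of the work by the initial Gibbs weight
`p n` cancels the initial energy, leaving `e^{-β Ef m} / Z⁰`. What remains of the average is the
total probability of reaching `m` through disturbance and transition, `∑ n l, q l n * P l m`,
which is `1` because `q` has unit row sums and `P` unit column sums; summing over `m` gives
`Zf / Z⁰`.
-/

lemma exp_neg_mul_div_mul_exp_neg_mul_sub (β a b Z : ℝ) :
    Real.exp (-β * a) / Z * Real.exp (-β * (b - a)) = Real.exp (-β * b) / Z := by
  rw [div_mul_eq_mul_div, ← Real.exp_add]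
  ring_nf

lemma sum_sum_mul_eq_one {R ι κ μ : Type*} [Semiring R] [Fintype ι] [Fintype κ]
    (q : κ → ι → R) (P : κ → μ → R) (hq : ∀ l, ∑ n, q l n = 1) (m : μ)
    (hP : ∑ l, P l m = 1) :
    ∑ n, ∑ l, q l n * P l m = 1 := by
  rw [sum_comm]
  simp only [← sum_mul, hq, one_mul, hP]

theorem jarzynski_minimally_invasive_general
    (d : ℕ) (E0 Ef : Fin d → ℝ) (β : ℝ)
    (Z0 Zf : ℝ)
    (hZf : Zf = ∑ m, Real.exp (-β * Ef m))
    (p : Fin d → ℝ)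
    (hp : ∀ n, p n = Real.exp (-β * E0 n) / Z0)
    (P : Fin d → Fin d → ℝ)
    (hPcol : ∀ m, ∑ l, P l m = 1)
    (q : Fin d → Fin d → ℝ)
    (hqrow : ∀ l, ∑ n, q l n = 1) :
    (∑ n, ∑ m, ∑ l, p n * q l n * P l m * Real.exp (-β * (Ef m - E0 n))) =
      Zf / Z0 := by
  have hterm : ∀ n m l, p n * q l n * P l m * Real.exp (-β * (Ef m - E0 n)) =
      q l n * P l m * (Real.exp (-β * Ef m) / Z0) := by
    intro n m l
    rw [hp, ← exp_neg_mul_div_mul_exp_neg_mul_sub β (E0 n) (Ef m)]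
    ring
  calc (∑ n, ∑ m, ∑ l, p n * q l n * P l m * Real.exp (-β * (Ef m - E0 n)))
      = ∑ m, (∑ n, ∑ l, q l n * P l m) * (Real.exp (-β * Ef m) / Z0) := by
        simp only [hterm, sum_mul]
        exact sum_comm
    _ = Zf / Z0 := by
        simp only [sum_sum_mul_eq_one q P hqrow _ (hPcol _), one_mul, hZf, sum_div]

/-- Jarzynski equality for minimally invasive (unital) non-ideal measurements:
if the measurement-disturbance probabilities are doubly stochastic and the
transition matrix is doubly stochastic, then the original Jarzynski relation
`⟨e^{−βW}⟩ = Zf / Z⁰ = e^{−βΔF}` holds exactly. -/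
theorem jarzynski_minimally_invasive
    (d : ℕ) (hd : 1 ≤ d) (E0 Ef : Fin d → ℝ) (β : ℝ) (hβ : 0 < β)
    (Z0 Zf : ℝ)
    (hZ0 : Z0 = ∑ n, Real.exp (-β * E0 n))
    (hZf : Zf = ∑ m, Real.exp (-β * Ef m))
    (p : Fin d → ℝ)
    (hp : ∀ n, p n = Real.exp (-β * E0 n) / Z0)
    (P : Fin d → Fin d → ℝ)
    (hP0 : ∀ l m, 0 ≤ P l m)
    (hProw : ∀ l, ∑ m, P l m = 1) (hPcol : ∀ m, ∑ l, P l m = 1)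
    (q : Fin d → Fin d → ℝ)
    (hq0 : ∀ l n, 0 ≤ q l n)
    (hqcol : ∀ n, ∑ l, q l n = 1) (hqrow : ∀ l, ∑ n, q l n = 1) :
    (∑ n, ∑ m, ∑ l, p n * q l n * P l m * Real.exp (-β * (Ef m - E0 n))) =
      Zf / Z0 :=
  jarzynski_minimally_invasive_general d E0 Ef β Z0 Zf hZf p hp P hPcol q hqrow
end

section
/- Second-law-like inequality for the non-ideal work estimate (Eq. (14) of the paper): the non-ideal TPM work estimate satisfies W_nonid ≥ ΔF − β⁻¹ * Real.log χ, where ΔF = β⁻¹ * Real.log (Z⁰ / Zf) and χ = (1 / Zf) * ∑ n m l, Real.exp (−β * Ef m) * q l n * P l m. (The proof uses Jensen's inequality exp⟨x⟩ ≤ ⟨exp x⟩ together with the modified Jarzynski equality ⟨e^{−βW}⟩_nonid = χ e^{−βΔF}.) -/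
open Finset

set_option maxHeartbeats 1000000 in
/-- Second-law-like inequality for the non-ideal work estimate (Eq. (14)):
`W_nonid ≥ ΔF − β⁻¹ * log χ`, where `ΔF = β⁻¹ * log (Z⁰ / Zf)` and
`χ = (1 / Zf) * ∑ n m l, exp (−β Ef m) * q l n * P l m`. -/
theorem second_law_like_inequality
    (d : ℕ) (hd : 1 ≤ d) (E0 Ef : Fin d → ℝ) (β : ℝ) (hβ : 0 < β)
    (Z0 Zf : ℝ)
    (hZ0 : Z0 = ∑ n, Real.exp (-β * E0 n))
    (hZf : Zf = ∑ m, Real.exp (-β * Ef m))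
    (p : Fin d → ℝ)
    (hp : ∀ n, p n = Real.exp (-β * E0 n) / Z0)
    (P : Fin d → Fin d → ℝ)
    (hP0 : ∀ l m, 0 ≤ P l m) (hP1 : ∀ l, ∑ m, P l m = 1)
    (q : Fin d → Fin d → ℝ)
    (hq0 : ∀ l n, 0 ≤ q l n) (hq1 : ∀ n, ∑ l, q l n = 1)
    (ΔF : ℝ) (hΔF : ΔF = β⁻¹ * Real.log (Z0 / Zf))
    (χ : ℝ)
    (hχ : χ = (1 / Zf) * ∑ n, ∑ m, ∑ l, Real.exp (-β * Ef m) * q l n * P l m) :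
    (∑ n, ∑ m, ∑ l, p n * q l n * P l m * (Ef m - E0 n)) ≥
      ΔF - β⁻¹ * Real.log χ := by
  have hne : (Finset.univ : Finset (Fin d)).Nonempty := ⟨⟨0, hd⟩, Finset.mem_univ _⟩
  have hZ0pos : 0 < Z0 := hZ0 ▸ Finset.sum_pos (fun n _ => Real.exp_pos _) hne
  have hZfpos : 0 < Zf := hZf ▸ Finset.sum_pos (fun m _ => Real.exp_pos _) hne
  -- positivity of the big sum
  have hSpos : 0 < ∑ n, ∑ m, ∑ l, Real.exp (-β * Ef m) * q l n * P l m := by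
    apply Finset.sum_pos _ hne
    intro n _
    rw [Finset.sum_comm]
    -- now ∑ l, ∑ m, ...
    have : ∀ l, 0 ≤ ∑ m, Real.exp (-β * Ef m) * q l n * P l m := fun l =>
      Finset.sum_nonneg fun m _ =>
        mul_nonneg (mul_nonneg (Real.exp_pos _).le (hq0 l n)) (hP0 l m)
    obtain ⟨l, _, hlpos⟩ : ∃ l ∈ Finset.univ, 0 < q l n := by
      by_contra h
      push_neg at h
      have : ∑ l, q l n = 0 := Finset.sum_eq_zero fun l hl =>
        le_antisymm (h l hl) (hq0 l n)
      rw [hq1 n] at this; norm_num at this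
    apply Finset.sum_pos' (fun l _ => this l)
    refine ⟨l, Finset.mem_univ l, ?_⟩
    obtain ⟨m, _, hmpos⟩ : ∃ m ∈ Finset.univ, 0 < P l m := by
      by_contra h
      push_neg at h
      have : ∑ m, P l m = 0 := Finset.sum_eq_zero fun m hm =>
        le_antisymm (h m hm) (hP0 l m)
      rw [hP1 l] at this; norm_num at this
    apply Finset.sum_pos' (fun m _ => mul_nonneg (mul_nonneg (Real.exp_pos _).le (hq0 l n)) (hP0 l m))
    exact ⟨m, Finset.mem_univ m, by positivity⟩
  have hχpos : 0 < χ := hχ ▸ by positivity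
  -- weights on triples
  set w : Fin d × Fin d × Fin d → ℝ := fun i => p i.1 * q i.2.2 i.1 * P i.2.2 i.2.1 with hw
  set x : Fin d × Fin d × Fin d → ℝ := fun i => Ef i.2.1 - E0 i.1 with hx
  have hppos : ∀ n, 0 < p n := fun n => by rw [hp]; positivity
  have hw0 : ∀ i ∈ Finset.univ, 0 ≤ w i := fun i _ =>
    mul_nonneg (mul_nonneg (hppos i.1).le (hq0 _ _)) (hP0 _ _)
  have hpsum : ∑ n, p n = 1 := by
    simp only [hp]
    rw [← Finset.sum_div, ← hZ0, div_self hZ0pos.ne']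
  have hw1 : ∑ i : Fin d × Fin d × Fin d, w i = 1 := by
    rw [Fintype.sum_prod_type]
    simp only [Fintype.sum_prod_type, hw]
    have hinner : ∀ n : Fin d, ∑ m, ∑ l, p n * q l n * P l m = p n := by
      intro n
      rw [Finset.sum_comm]
      simp only [← Finset.mul_sum, hP1, mul_one, hq1]
    simp only [hinner, hpsum]
  have hW : (∑ n, ∑ m, ∑ l, p n * q l n * P l m * (Ef m - E0 n))
      = ∑ i : Fin d × Fin d × Fin d, w i * x i := by
    rw [Fintype.sum_prod_type]
    simp only [Fintype.sum_prod_type, hw, hx]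
  set W := ∑ i : Fin d × Fin d × Fin d, w i * x i with hWdef
  -- Jensen
  have hjensen : Real.exp (∑ i : Fin d × Fin d × Fin d, w i • (-β * x i)) ≤
      ∑ i : Fin d × Fin d × Fin d, w i * Real.exp (-β * x i) :=
    convexOn_exp.map_sum_le hw0 hw1 (fun i _ => Set.mem_univ _)
  have hmean : ∑ i : Fin d × Fin d × Fin d, w i • (-β * x i) = -β * W := by
    simp only [smul_eq_mul, hWdef, Finset.mul_sum]
    congr 1; ext i; ring
  -- compute RHS of Jensen
  have hrhs : ∑ i : Fin d × Fin d × Fin d, w i * Real.exp (-β * x i)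
      = χ * (Zf / Z0) := by
    rw [Fintype.sum_prod_type]
    simp only [Fintype.sum_prod_type, hw, hx]
    have key : ∀ n m l, p n * q l n * P l m * Real.exp (-β * (Ef m - E0 n))
        = (1 / Z0) * (Real.exp (-β * Ef m) * q l n * P l m) := by
      intro n m l
      rw [hp]
      rw [show -β * (Ef m - E0 n) = -β * Ef m + -(-β * E0 n) by ring,
        Real.exp_add, Real.exp_neg]
      field_simp
    calc ∑ n, ∑ m, ∑ l, p n * q l n * P l m * Real.exp (-β * (Ef m - E0 n))
        = ∑ n, ∑ m, ∑ l, (1 / Z0) * (Real.exp (-β * Ef m) * q l n * P l m) := by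
          simp only [key]
      _ = (1 / Z0) * ∑ n, ∑ m, ∑ l, Real.exp (-β * Ef m) * q l n * P l m := by
          simp only [← Finset.mul_sum]
      _ = χ * (Zf / Z0) := by
          rw [hχ]; field_simp
  have hkey : Real.exp (-β * W) ≤ χ * (Zf / Z0) := by
    rw [← hmean, ← hrhs]; exact hjensen
  have hlog : -β * W ≤ Real.log (χ * (Zf / Z0)) :=
    (Real.le_log_iff_exp_le (by positivity)).mpr hkey
  rw [Real.log_mul hχpos.ne' (by positivity), Real.log_div hZfpos.ne' hZ0pos.ne'] at hlog
  rw [hW, hΔF, Real.log_div hZ0pos.ne' hZfpos.ne', ge_iff_le]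
  have h2 := mul_le_mul_of_nonneg_left hlog (inv_pos.mpr hβ).le
  have h1 : β⁻¹ * (-β * W) = -W := by field_simp
  rw [h1] at h2
  ring_nf at h2 ⊢
  linarith
end

section
/- Proposition 1 of the paper (dissipated work identity for the non-ideal TPM scheme, classical-reduced form): β * (W_nonid − ΔF) = ΔS₀ + D, where ΔF = β⁻¹ * Real.log (Z⁰ / Zf); r l = ∑ n, p n * q l n is the unconditional post-measurement distribution of the first measurement and s m = ∑ l, r l * P l m is the diagonal of the evolved state ρ̃^(f) in the final energy eigenbasis; ΔS₀ = (∑ l, Real.negMulLog (r l)) − (∑ n, Real.negMulLog (p n)) is the entropy change due to the first non-ideal measurement; and D = −(∑ l, Real.negMulLog (r l)) − ∑ m, s m * Real.log (Real.exp (−β * Ef m) / Zf) is the relative entropy D(ρ̃^(f) ‖ τ^(f)) (using unitary invariance of the von Neumann entropy, S(ρ̃^(f)) = ∑ l, Real.negMulLog (r l)). -/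
/-!
Write `τ` for the Gibbs distribution `exp (-β E) / Z`. Since `log τ = -β E - log Z`, the cross
entropy of any probability vector `s` against `τ` is `-β ⟨E⟩_s - log Z`; in particular the entropy
of the initial Gibbs state is `log Z⁰ + β ⟨E⁰⟩_p`. Because `q` and `P` are stochastic, the work
average only sees the marginals: `W = ⟨Ef⟩_s - ⟨E⁰⟩_p`. Substituting these three formulas, the
entropy `H(r)` of the post-measurement state cancels between `ΔS₀` and `D`, and both sides reduce
to `β ⟨Ef⟩_s - β ⟨E⁰⟩_p - log Z⁰ + log Zf`.
-/

open Finset Real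

section Stochastic

variable {ι κ μ : Type*} [Fintype ι] [Fintype κ] [Fintype μ]

theorem sum_sum_mul_eq_of_sum_eq_one (p : ι → ℝ) {f : κ → ι → ℝ}
    (hf : ∀ i, ∑ k, f k i = 1) : ∑ k, ∑ i, p i * f k i = ∑ i, p i := by
  rw [sum_comm]
  simp only [← mul_sum, hf, mul_one]

theorem sum_two_step_mul_final (p : ι → ℝ) (q : κ → ι → ℝ) (P : κ → μ → ℝ) (g : μ → ℝ) :
    ∑ n, ∑ m, ∑ l, p n * q l n * P l m * g m =
      ∑ m, (∑ l, (∑ n, p n * q l n) * P l m) * g m := by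
  rw [sum_comm]
  refine sum_congr rfl fun m _ => ?_
  rw [sum_comm, sum_mul]
  simp only [sum_mul]

theorem sum_two_step_mul_initial (p : ι → ℝ) {q : κ → ι → ℝ} {P : κ → μ → ℝ}
    (hq : ∀ n, ∑ l, q l n = 1) (hP : ∀ l, ∑ m, P l m = 1) (g : ι → ℝ) :
    ∑ n, ∑ m, ∑ l, p n * q l n * P l m * g n = ∑ n, p n * g n := by
  refine sum_congr rfl fun n _ => ?_
  rw [sum_comm]
  calc ∑ l, ∑ m, p n * q l n * P l m * g n = ∑ l, p n * g n * q l n * ∑ m, P l m := by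
        simp only [mul_sum]
        exact sum_congr rfl fun _ _ => sum_congr rfl fun _ _ => by ring
    _ = p n * g n := by simp only [hP, mul_one, ← mul_sum, hq]

end Stochastic

section Gibbs

variable {ι : Type*} [Fintype ι]

theorem sum_mul_log_gibbs {s E : ι → ℝ} {β Z : ℝ} (hZ : 0 < Z) (hs : ∑ i, s i = 1) :
    ∑ i, s i * log (exp (-β * E i) / Z) = -β * ∑ i, s i * E i - log Z := by
  simp only [log_div (exp_ne_zero _) hZ.ne', log_exp, mul_sub, sum_sub_distrib, ← sum_mul, hs,
    one_mul, mul_sum]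
  exact congrArg (· - log Z) (sum_congr rfl fun _ _ => by ring)

theorem sum_negMulLog_gibbs {p E : ι → ℝ} {β Z : ℝ} (hZ : 0 < Z) (hp1 : ∑ i, p i = 1)
    (hp : ∀ i, p i = exp (-β * E i) / Z) :
    ∑ i, negMulLog (p i) = log Z + β * ∑ i, p i * E i := by
  have hcross := sum_mul_log_gibbs (E := E) (β := β) hZ hp1
  simp only [← hp] at hcross
  simp only [negMulLog, neg_mul, sum_neg_distrib, hcross]
  ring

end Gibbs

theorem dissipated_work_identity_general
    (d : ℕ) (hd : 1 ≤ d) (E0 Ef : Fin d → ℝ) (β : ℝ) (hβ : 0 < β)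
    (Z0 Zf : ℝ)
    (hZ0 : Z0 = ∑ n, Real.exp (-β * E0 n))
    (hZf : Zf = ∑ m, Real.exp (-β * Ef m))
    (p : Fin d → ℝ)
    (hp : ∀ n, p n = Real.exp (-β * E0 n) / Z0)
    (P : Fin d → Fin d → ℝ)
    (hP1 : ∀ l, ∑ m, P l m = 1)
    (q : Fin d → Fin d → ℝ)
    (hq1 : ∀ n, ∑ l, q l n = 1)
    (W ΔF : ℝ)
    (hW : W = ∑ n, ∑ m, ∑ l, p n * q l n * P l m * (Ef m - E0 n))
    (hΔF : ΔF = β⁻¹ * Real.log (Z0 / Zf))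
    (r s : Fin d → ℝ)
    (hr : ∀ l, r l = ∑ n, p n * q l n)
    (hs : ∀ m, s m = ∑ l, r l * P l m)
    (ΔS0 D : ℝ)
    (hΔS0 : ΔS0 = (∑ l, Real.negMulLog (r l)) - (∑ n, Real.negMulLog (p n)))
    (hD : D = -(∑ l, Real.negMulLog (r l)) -
        ∑ m, s m * Real.log (Real.exp (-β * Ef m) / Zf)) :
    β * (W - ΔF) = ΔS0 + D := by
  have : Nonempty (Fin d) := ⟨⟨0, hd⟩⟩
  have hZ0pos : 0 < Z0 := hZ0 ▸ sum_pos (fun _ _ => exp_pos _) univ_nonempty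
  have hZfpos : 0 < Zf := hZf ▸ sum_pos (fun _ _ => exp_pos _) univ_nonempty
  have hp_sum : ∑ n, p n = 1 := by
    simp only [hp, ← sum_div, ← hZ0, div_self hZ0pos.ne']
  have hs_sum : ∑ m, s m = 1 := by
    simp only [hs, hr]
    rw [sum_sum_mul_eq_of_sum_eq_one _ (f := fun m l => P l m) hP1,
      sum_sum_mul_eq_of_sum_eq_one _ hq1, hp_sum]
  have hW_mean : W = ∑ m, s m * Ef m - ∑ n, p n * E0 n := by
    simp only [hW, mul_sub, sum_sub_distrib, sum_two_step_mul_final,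
      sum_two_step_mul_initial p hq1 hP1, ← hr, ← hs]
  have hβΔF : β * ΔF = log Z0 - log Zf := by
    rw [hΔF, ← mul_assoc, mul_inv_cancel₀ hβ.ne', one_mul, log_div hZ0pos.ne' hZfpos.ne']
  rw [hΔS0, hD, hW_mean, mul_sub, hβΔF, sum_negMulLog_gibbs hZ0pos hp_sum hp,
    sum_mul_log_gibbs hZfpos hs_sum]
  ring

/-- Proposition 1 (dissipated work identity for the non-ideal TPM scheme,
classical-reduced form): `β * (W_nonid − ΔF) = ΔS₀ + D`, where
`ΔS₀ = H(r) − H(p)` is the entropy change of the first non-ideal measurement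
and `D = −H(r) − ∑ m, s m * log (exp (−β Ef m) / Zf)` is the relative entropy
`D(ρ̃^(f) ‖ τ^(f))`, with `r l = ∑ n, p n * q l n` and
`s m = ∑ l, r l * P l m`. -/
theorem dissipated_work_identity
    (d : ℕ) (hd : 1 ≤ d) (E0 Ef : Fin d → ℝ) (β : ℝ) (hβ : 0 < β)
    (Z0 Zf : ℝ)
    (hZ0 : Z0 = ∑ n, Real.exp (-β * E0 n))
    (hZf : Zf = ∑ m, Real.exp (-β * Ef m))
    (p : Fin d → ℝ)
    (hp : ∀ n, p n = Real.exp (-β * E0 n) / Z0)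
    (P : Fin d → Fin d → ℝ)
    (hP0 : ∀ l m, 0 ≤ P l m) (hP1 : ∀ l, ∑ m, P l m = 1)
    (q : Fin d → Fin d → ℝ)
    (hq0 : ∀ l n, 0 ≤ q l n) (hq1 : ∀ n, ∑ l, q l n = 1)
    (W ΔF : ℝ)
    (hW : W = ∑ n, ∑ m, ∑ l, p n * q l n * P l m * (Ef m - E0 n))
    (hΔF : ΔF = β⁻¹ * Real.log (Z0 / Zf))
    (r s : Fin d → ℝ)
    (hr : ∀ l, r l = ∑ n, p n * q l n)
    (hs : ∀ m, s m = ∑ l, r l * P l m)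
    (ΔS0 D : ℝ)
    (hΔS0 : ΔS0 = (∑ l, Real.negMulLog (r l)) - (∑ n, Real.negMulLog (p n)))
    (hD : D = -(∑ l, Real.negMulLog (r l)) -
        ∑ m, s m * Real.log (Real.exp (-β * Ef m) / Zf)) :
    β * (W - ΔF) = ΔS0 + D :=
  dissipated_work_identity_general d hd E0 Ef β hβ Z0 Zf hZ0 hZf p hp P hP1 q hq1 W ΔF hW hΔF r s hr
    hs ΔS0 D hΔS0 hD
end

section
/- Decomposition of the average energy change in the non-ideal TPM scheme (Eq. (18) of the paper): suppose both non-ideal measurements have maximal correlation C, i.e. q⁰ n n = C for all n and qf m m = C for all m. Define ΔE_nonid = ∑ m n k l, qf k m * P l m * q⁰ l n * p n * (Ef k − E⁰ n). Then ΔE_nonid = C^2 * W_Λ + (∑ m n, ∑ l ≠ n, ∑ k ≠ m, qf k m * P l m * q⁰ l n * p n * (Ef k − E⁰ n)) + C * ∑ m n, p n * ((∑ k ≠ m, qf k m * P n m * (Ef k − E⁰ n)) + (∑ l ≠ n, q⁰ l n * P l m * (Ef m − E⁰ n))), where W_Λ = ∑ n m, p n * P n m * (Ef m − E⁰ n). 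-/
open Finset

/-!
Each summand of `ΔE_nonid` is a double sum over the outcomes `k` of the second and `l` of the
first measurement. Splitting off the diagonal outcomes `k = m` and `l = n` leaves four parts:
the fully diagonal one carries the weight `qf m m * q⁰ n n = C²` and sums to `C² W_Λ`, the two
half-diagonal ones carry a single factor `C`, and the remainder is the doubly off-diagonal sum.
-/

section OffDiagonal

variable {ι κ M : Type*} [Fintype ι] [Fintype κ] [DecidableEq ι] [DecidableEq κ]
  [AddCommMonoid M]

theorem Finset.sum_univ_eq_add_sum_filter_ne (f : ι → M) (i : ι) :
    ∑ k, f k = f i + ∑ k ∈ univ.filter (· ≠ i), f k := by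
  rw [filter_ne', add_sum_erase _ f (mem_univ i)]

theorem Finset.sum_sum_univ_eq_diag_add_offDiag (f : ι → κ → M) (i : ι) (j : κ) :
    ∑ k, ∑ l, f k l =
      f i j + (∑ k ∈ univ.filter (· ≠ i), f k j + ∑ l ∈ univ.filter (· ≠ j), f i l) +
        ∑ k ∈ univ.filter (· ≠ i), ∑ l ∈ univ.filter (· ≠ j), f k l := by
  simp only [sum_univ_eq_add_sum_filter_ne _ j, sum_add_distrib]
  rw [sum_univ_eq_add_sum_filter_ne (fun k => f k j) i,
    sum_univ_eq_add_sum_filter_ne (fun k => ∑ l ∈ univ.filter (· ≠ j), f k l) i]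
  abel

end OffDiagonal

theorem average_energy_change_decomposition_general
    (d : ℕ) (E0 Ef : Fin d → ℝ)
    (p : Fin d → ℝ)
    (P : Fin d → Fin d → ℝ)
    (q0 qf : Fin d → Fin d → ℝ)
    (C : ℝ)
    (hq0C : ∀ n, q0 n n = C) (hqfC : ∀ m, qf m m = C)
    (ΔE : ℝ)
    (hΔE : ΔE = ∑ m, ∑ n, ∑ k, ∑ l,
        qf k m * P l m * q0 l n * p n * (Ef k - E0 n))
    (WΛ : ℝ)
    (hWΛ : WΛ = ∑ n, ∑ m, p n * P n m * (Ef m - E0 n)) :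
    ΔE = C ^ 2 * WΛ +
        (∑ m, ∑ n, ∑ l ∈ univ.filter (· ≠ n), ∑ k ∈ univ.filter (· ≠ m),
          qf k m * P l m * q0 l n * p n * (Ef k - E0 n)) +
        C * ∑ m, ∑ n, p n *
          ((∑ k ∈ univ.filter (· ≠ m), qf k m * P n m * (Ef k - E0 n)) +
            (∑ l ∈ univ.filter (· ≠ n), q0 l n * P l m * (Ef m - E0 n))) := by
  subst hΔE hWΛ
  rw [sum_comm (f := fun n m => p n * P n m * (Ef m - E0 n))]
  simp only [mul_sum, ← sum_add_distrib]
  refine sum_congr rfl fun m _ => sum_congr rfl fun n _ => ?_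
  rw [sum_sum_univ_eq_diag_add_offDiag _ m n, sum_comm (s := univ.filter (· ≠ m)), hqfC, hq0C,
    add_right_comm]
  congr 1
  · ring
  · rw [mul_add, mul_add, mul_sum, mul_sum, mul_sum, mul_sum]
    congr 1 <;> exact sum_congr rfl fun _ _ => by ring

/-- Decomposition of the average energy change in the non-ideal TPM scheme
(Eq. (18)): if both non-ideal measurements have maximal correlation `C`
(`q⁰ n n = C` and `qf m m = C`), then
`ΔE_nonid = C² W_Λ + (∑ m n, ∑ l ≠ n, ∑ k ≠ m, qf k m * P l m * q⁰ l n * p n * (Ef k − E⁰ n))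
 + C * ∑ m n, p n * ((∑ k ≠ m, qf k m * P n m * (Ef k − E⁰ n))
 + (∑ l ≠ n, q⁰ l n * P l m * (Ef m − E⁰ n)))`. -/
theorem average_energy_change_decomposition
    (d : ℕ) (hd : 1 ≤ d) (E0 Ef : Fin d → ℝ) (β : ℝ) (hβ : 0 < β)
    (p : Fin d → ℝ)
    (hp : ∀ n, p n = Real.exp (-β * E0 n) / ∑ k, Real.exp (-β * E0 k))
    (P : Fin d → Fin d → ℝ)
    (hP0 : ∀ l m, 0 ≤ P l m) (hP1 : ∀ l, ∑ m, P l m = 1)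
    (q0 qf : Fin d → Fin d → ℝ)
    (hq00 : ∀ l n, 0 ≤ q0 l n) (hq01 : ∀ n, ∑ l, q0 l n = 1)
    (hqf0 : ∀ k m, 0 ≤ qf k m) (hqf1 : ∀ m, ∑ k, qf k m = 1)
    (C : ℝ) (hC0 : 0 ≤ C) (hC1 : C ≤ 1)
    (hq0C : ∀ n, q0 n n = C) (hqfC : ∀ m, qf m m = C)
    (ΔE : ℝ)
    (hΔE : ΔE = ∑ m, ∑ n, ∑ k, ∑ l,
        qf k m * P l m * q0 l n * p n * (Ef k - E0 n))
    (WΛ : ℝ)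
    (hWΛ : WΛ = ∑ n, ∑ m, p n * P n m * (Ef m - E0 n)) :
    ΔE = C ^ 2 * WΛ +
        (∑ m, ∑ n, ∑ l ∈ univ.filter (· ≠ n), ∑ k ∈ univ.filter (· ≠ m),
          qf k m * P l m * q0 l n * p n * (Ef k - E0 n)) +
        C * ∑ m, ∑ n, p n *
          ((∑ k ∈ univ.filter (· ≠ m), qf k m * P n m * (Ef k - E0 n)) +
            (∑ l ∈ univ.filter (· ≠ n), q0 l n * P l m * (Ef m - E0 n))) :=
  average_energy_change_decomposition_general d E0 Ef p P q0 qf C hq0C hqfC ΔE hΔE WΛ hWΛ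
end
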